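/- Let δ ∈ (0,2) and β > 0, and let L : ℝ → ℝ be a measurable function satisfying |L(θ)| ≤ β·exp(|θ|^{2−δ}) for all θ ∈ ℝ. Then for every σ > 0 the Gaussian smoothed loss L_σ is twice differentiable at every θ ∈ ℝ, with second derivative L_σ″(θ) = (1/σ⁴)·E_{ε ~ N(0,σ²)}[(ε² − σ²)·L(θ + ε)]. -/

import Mathlib

open MeasureTheory ProbabilityTheory Real

/-- The Gaussian smoothing `L_σ(θ) = E_{ε ~ N(0,σ²)}[L (θ + ε)]` of a loss `L`. -/
noncomputable def gaussianSmoothing (L : ℝ → ℝ) (σ θ : ℝ) : ℝ :=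
  ∫ ε, L (θ + ε) ∂(gaussianReal 0 ⟨σ ^ 2, sq_nonneg σ⟩)

/- Auxiliary lemmas -/

lemma gaussianReal_integral_eq {v : NNReal} (hv : v ≠ 0) (f : ℝ → ℝ) :
    ∫ x, f x ∂(gaussianReal 0 v) = ∫ x, gaussianPDFReal 0 v x * f x := by
  rw [gaussianReal_of_var_ne_zero 0 hv]
  have h : (gaussianPDF 0 v)
      = fun x => ((Real.toNNReal (gaussianPDFReal 0 v x) : NNReal) : ENNReal) := rfl
  rw [h, integral_withDensity_eq_integral_smul ((measurable_gaussianPDFReal 0 v).real_toNNReal)]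
  refine integral_congr_ae (ae_of_all _ fun x => ?_)
  simp [NNReal.smul_def, Real.coe_toNNReal _ (gaussianPDFReal_nonneg 0 v x)]

lemma key_ineq {δ : ℝ} (hδ0 : 0 < δ) (hδ2 : δ < 2) {a : ℝ} (ha : 0 < a) :
    ∃ M : ℝ, ∀ x : ℝ, |x| ^ (2 - δ) ≤ a * x ^ 2 + M := by
  set R : ℝ := max 1 ((1 / a) ^ (1 / δ)) with hR
  have hR1 : (1 : ℝ) ≤ R := le_max_left _ _
  have hR0 : (0 : ℝ) < R := lt_of_lt_of_le one_pos hR1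
  refine ⟨R ^ (2 - δ), fun x => ?_⟩
  rcases le_or_gt |x| R with h | h
  · have h1 : |x| ^ (2 - δ) ≤ R ^ (2 - δ) :=
      Real.rpow_le_rpow (abs_nonneg x) h (by linarith)
    nlinarith [mul_nonneg ha.le (sq_nonneg x)]
  · have hx0 : (0 : ℝ) < |x| := lt_trans hR0 h
    have h2 : (1 / a) ≤ R ^ δ := by
      have h2a : (1 / a) ^ (1 / δ) ≤ R := le_max_right _ _
      have h2b := Real.rpow_le_rpow (Real.rpow_nonneg (by positivity) _) h2a hδ0.le
      rwa [← Real.rpow_mul (by positivity), one_div_mul_cancel hδ0.ne', Real.rpow_one] at h2b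
    have h3 : (1 / a) ≤ |x| ^ δ := h2.trans (Real.rpow_le_rpow hR0.le h.le hδ0.le)
    have h4 : |x| ^ (2 - δ) = |x| ^ (2 : ℝ) / |x| ^ δ := Real.rpow_sub hx0 2 δ
    have h5 : |x| ^ (2 : ℝ) = x ^ 2 := by
      rw [show (2 : ℝ) = ((2 : ℕ) : ℝ) by norm_num, Real.rpow_natCast, sq_abs]
    rw [h4, h5]
    have h6 : x ^ 2 / |x| ^ δ ≤ a * x ^ 2 := by
      rw [div_le_iff₀ (by positivity)]
      have h7 : 1 ≤ a * |x| ^ δ := by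
        rw [one_div] at h3
        calc (1 : ℝ) = a * a⁻¹ := (mul_inv_cancel₀ ha.ne').symm
          _ ≤ a * |x| ^ δ := mul_le_mul_of_nonneg_left h3 ha.le
      nlinarith [sq_nonneg x, Real.rpow_nonneg (abs_nonneg x) δ]
    have h8 : 0 ≤ R ^ (2 - δ) := Real.rpow_nonneg hR0.le _
    linarith

lemma sq_shift {x t c : ℝ} (h : |t| ≤ c) : x ^ 2 / 2 - c ^ 2 ≤ (x - t) ^ 2 := by
  have h1 : t ^ 2 ≤ c ^ 2 := by nlinarith [abs_nonneg t, sq_abs t]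
  nlinarith [sq_nonneg (x - 2 * t)]

lemma aux_int {b : ℝ} (hb : 0 < b) :
    Integrable (fun x : ℝ => (1 + x ^ 2) * Real.exp (-b * x ^ 2)) := by
  have h1 := integrable_exp_neg_mul_sq hb
  have h2 : Integrable (fun x : ℝ => x ^ 2 * Real.exp (-b * x ^ 2)) := by
    have h := integrable_rpow_mul_exp_neg_mul_sq hb (s := 2) (by norm_num)
    have he : ∀ x : ℝ, x ^ (2 : ℝ) = x ^ 2 := fun x => by
      rw [show (2 : ℝ) = ((2 : ℕ) : ℝ) by norm_num, Real.rpow_natCast]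
    simpa [he] using h
  refine (h1.add h2).congr (ae_of_all _ fun x => ?_)
  simp only [Pi.add_apply]
  ring

lemma gauss_kernel_hasDerivAt (σ x : ℝ) (t : ℝ) :
    HasDerivAt (fun s : ℝ => (Real.sqrt (2 * π * σ ^ 2))⁻¹ * Real.exp (-(x - s) ^ 2 / (2 * σ ^ 2)))
      ((x - t) / σ ^ 2 * ((Real.sqrt (2 * π * σ ^ 2))⁻¹ *
        Real.exp (-(x - t) ^ 2 / (2 * σ ^ 2)))) t := by
  have h0 : HasDerivAt (fun s : ℝ => x - s) (-1) t := (hasDerivAt_id t).const_sub x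
  have h1 : HasDerivAt (fun s : ℝ => -(x - s) ^ 2 / (2 * σ ^ 2)) ((x - t) / σ ^ 2) t := by
    have h2 := ((h0.pow 2).neg).div_const (2 * σ ^ 2)
    refine h2.congr_deriv ?_
    rcases eq_or_ne σ 0 with hσ | hσ
    · simp [hσ]
    · field_simp
      ring
  have h4 := h1.exp.const_mul ((Real.sqrt (2 * π * σ ^ 2))⁻¹)
  refine h4.congr_deriv ?_
  ring

lemma gauss_kernel2_hasDerivAt (σ x : ℝ) (hσ : σ ≠ 0) (t : ℝ) :
    HasDerivAt (fun s : ℝ => (x - s) / σ ^ 2 * ((Real.sqrt (2 * π * σ ^ 2))⁻¹ *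
        Real.exp (-(x - s) ^ 2 / (2 * σ ^ 2))))
      (((x - t) ^ 2 - σ ^ 2) / σ ^ 4 * ((Real.sqrt (2 * π * σ ^ 2))⁻¹ *
        Real.exp (-(x - t) ^ 2 / (2 * σ ^ 2)))) t := by
  have ha : HasDerivAt (fun s : ℝ => (x - s) / σ ^ 2) (-1 / σ ^ 2) t :=
    ((hasDerivAt_id t).const_sub x).div_const _
  have hb := gauss_kernel_hasDerivAt σ x t
  have hc := ha.mul hb
  refine hc.congr_deriv ?_
  field_simp
  ring

lemma master_bound {σ β δ M c K : ℝ} (hσ : 0 < σ) (hβ : 0 < β)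
    {L : ℝ → ℝ} (hgrowth : ∀ y : ℝ, |L y| ≤ β * Real.exp (|y| ^ (2 - δ)))
    (hM : ∀ y : ℝ, |y| ^ (2 - δ) ≤ 1 / (8 * σ ^ 2) * y ^ 2 + M)
    (hc : 0 ≤ c) (hK : 0 ≤ K)
    (x t p : ℝ) (ht : |t| ≤ c) (hp : |p| ≤ K * (1 + x ^ 2)) :
    |L x * (p * ((Real.sqrt (2 * π * σ ^ 2))⁻¹ * Real.exp (-(x - t) ^ 2 / (2 * σ ^ 2))))|
      ≤ (β * Real.exp M * K * (Real.sqrt (2 * π * σ ^ 2))⁻¹ * Real.exp (c ^ 2 / (2 * σ ^ 2))) *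
        ((1 + x ^ 2) * Real.exp (-(1 / (8 * σ ^ 2)) * x ^ 2)) := by
  have hσ2 : (0 : ℝ) < σ ^ 2 := by positivity
  have hcg0 : (0 : ℝ) ≤ (Real.sqrt (2 * π * σ ^ 2))⁻¹ := by positivity
  have habs : |L x * (p * ((Real.sqrt (2 * π * σ ^ 2))⁻¹ * Real.exp (-(x - t) ^ 2 / (2 * σ ^ 2))))|
      = |L x| * (|p| * ((Real.sqrt (2 * π * σ ^ 2))⁻¹ * Real.exp (-(x - t) ^ 2 / (2 * σ ^ 2)))) := by
    rw [abs_mul, abs_mul, abs_mul, abs_of_nonneg hcg0, abs_of_nonneg (Real.exp_pos _).le]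
  rw [habs]
  have key : |x| ^ (2 - δ) + (-(x - t) ^ 2 / (2 * σ ^ 2))
      ≤ M + c ^ 2 / (2 * σ ^ 2) + (-(1 / (8 * σ ^ 2)) * x ^ 2) := by
    have f1 := hM x
    have f2 : -(x - t) ^ 2 / (2 * σ ^ 2) ≤ -(x ^ 2 / 2 - c ^ 2) / (2 * σ ^ 2) := by
      apply div_le_div_of_nonneg_right ?_ ?_ |>.trans_eq rfl
      · exact neg_le_neg (sq_shift ht)
      · positivity
    have f3 : -(x ^ 2 / 2 - c ^ 2) / (2 * σ ^ 2)
        = c ^ 2 / (2 * σ ^ 2) + (-(1 / (8 * σ ^ 2)) * x ^ 2) + (-(1 / (8 * σ ^ 2)) * x ^ 2) := by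
      field_simp
      ring
    rw [f3] at f2
    linarith
  calc |L x| * (|p| * ((Real.sqrt (2 * π * σ ^ 2))⁻¹ * Real.exp (-(x - t) ^ 2 / (2 * σ ^ 2))))
      ≤ (β * Real.exp (|x| ^ (2 - δ))) * ((K * (1 + x ^ 2)) *
        ((Real.sqrt (2 * π * σ ^ 2))⁻¹ * Real.exp (-(x - t) ^ 2 / (2 * σ ^ 2)))) := by
        apply mul_le_mul (hgrowth x) _ (by positivity) (by positivity)
        apply mul_le_mul_of_nonneg_right hp (by positivity)
    _ = (β * K * (Real.sqrt (2 * π * σ ^ 2))⁻¹ * (1 + x ^ 2)) *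
        Real.exp (|x| ^ (2 - δ) + (-(x - t) ^ 2 / (2 * σ ^ 2))) := by
        rw [Real.exp_add]; ring
    _ ≤ (β * K * (Real.sqrt (2 * π * σ ^ 2))⁻¹ * (1 + x ^ 2)) *
        Real.exp (M + c ^ 2 / (2 * σ ^ 2) + (-(1 / (8 * σ ^ 2)) * x ^ 2)) := by
        apply mul_le_mul_of_nonneg_left (Real.exp_le_exp.2 key) (by positivity)
    _ = (β * Real.exp M * K * (Real.sqrt (2 * π * σ ^ 2))⁻¹ * Real.exp (c ^ 2 / (2 * σ ^ 2))) *
        ((1 + x ^ 2) * Real.exp (-(1 / (8 * σ ^ 2)) * x ^ 2)) := by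
        rw [Real.exp_add, Real.exp_add]; ring

/-- Under the growth bound, the Gaussian smoothed loss `L_σ` is twice
differentiable at every `θ`, with second derivative
`L_σ″(θ) = (1/σ⁴) · E_{ε ~ N(0,σ²)}[(ε² − σ²) · L(θ + ε)]`. -/
theorem gaussian_smoothing_second_derivative
    (δ β : ℝ) (hδ : δ ∈ Set.Ioo (0 : ℝ) 2) (hβ : 0 < β)
    (L : ℝ → ℝ) (hL : Measurable L)
    (hgrowth : ∀ θ : ℝ, |L θ| ≤ β * Real.exp (|θ| ^ (2 - δ)))
    (σ : ℝ) (hσ : 0 < σ) (θ : ℝ) :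
    HasDerivAt (deriv (fun t : ℝ => gaussianSmoothing L σ t))
      ((1 / σ ^ 4) *
        ∫ ε, (ε ^ 2 - σ ^ 2) * L (θ + ε) ∂(gaussianReal 0 ⟨σ ^ 2, sq_nonneg σ⟩)) θ := by
  obtain ⟨hδ0, hδ2⟩ := hδ
  have hσ2 : (0 : ℝ) < σ ^ 2 := by positivity
  have hv : (⟨σ ^ 2, sq_nonneg σ⟩ : NNReal) ≠ 0 := by
    intro h
    have h' : ((⟨σ ^ 2, sq_nonneg σ⟩ : NNReal) : ℝ) = 0 := by rw [h]; simp
    exact hσ2.ne' h'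
  have hpdf : ∀ y : ℝ, gaussianPDFReal 0 (⟨σ ^ 2, sq_nonneg σ⟩ : NNReal) y
      = (Real.sqrt (2 * π * σ ^ 2))⁻¹ * Real.exp (-y ^ 2 / (2 * σ ^ 2)) := by
    intro y
    have hvc : ((⟨σ ^ 2, sq_nonneg σ⟩ : NNReal) : ℝ) = σ ^ 2 := rfl
    simp only [gaussianPDFReal, sub_zero]
    rfl
  -- Step A: convolution form
  have stepA : ∀ t : ℝ, gaussianSmoothing L σ t
      = ∫ x, L x * ((Real.sqrt (2 * π * σ ^ 2))⁻¹ * Real.exp (-(x - t) ^ 2 / (2 * σ ^ 2))) := by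
    intro t
    calc gaussianSmoothing L σ t
        = ∫ ε, gaussianPDFReal 0 (⟨σ ^ 2, sq_nonneg σ⟩ : NNReal) ε * L (t + ε) :=
          gaussianReal_integral_eq hv _
      _ = ∫ x, gaussianPDFReal 0 (⟨σ ^ 2, sq_nonneg σ⟩ : NNReal) (x - t) * L (t + (x - t)) :=
          (integral_sub_right_eq_self
            (fun ε => gaussianPDFReal 0 (⟨σ ^ 2, sq_nonneg σ⟩ : NNReal) ε * L (t + ε)) t).symm
      _ = ∫ x, L x * ((Real.sqrt (2 * π * σ ^ 2))⁻¹ * Real.exp (-(x - t) ^ 2 / (2 * σ ^ 2))) := by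
          refine integral_congr_ae (ae_of_all _ fun x => ?_)
          dsimp only
          have hx : t + (x - t) = x := by ring
          rw [hpdf, hx]; ring
  obtain ⟨M, hM⟩ := key_ineq hδ0 hδ2 (show (0 : ℝ) < 1 / (8 * σ ^ 2) by positivity)
  have hInt : ∀ C : ℝ, Integrable
      (fun x : ℝ => C * ((1 + x ^ 2) * Real.exp (-(1 / (8 * σ ^ 2)) * x ^ 2))) :=
    fun C => (aux_int (by positivity)).const_mul C
  have meas0 : ∀ t : ℝ, AEStronglyMeasurable
      (fun x => L x * ((Real.sqrt (2 * π * σ ^ 2))⁻¹ * Real.exp (-(x - t) ^ 2 / (2 * σ ^ 2))))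
      volume := by
    intro t
    exact (hL.mul (by fun_prop)).aestronglyMeasurable
  have meas1 : ∀ (q : ℝ → ℝ), Continuous q → ∀ t : ℝ, AEStronglyMeasurable
      (fun x => L x * (q x * ((Real.sqrt (2 * π * σ ^ 2))⁻¹ *
        Real.exp (-(x - t) ^ 2 / (2 * σ ^ 2))))) volume := by
    intro q hq t
    exact (hL.mul (by fun_prop)).aestronglyMeasurable
  have habs : ∀ x : ℝ, |x| ≤ 1 + x ^ 2 := fun x => by nlinarith [sq_nonneg (|x| - 1), sq_abs x]
  -- First derivative, at every point
  have deriv1 : ∀ t₀ : ℝ,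
      Integrable (fun x => L x * ((x - t₀) / σ ^ 2 * ((Real.sqrt (2 * π * σ ^ 2))⁻¹ *
        Real.exp (-(x - t₀) ^ 2 / (2 * σ ^ 2))))) ∧
      HasDerivAt (fun t => ∫ x, L x * ((Real.sqrt (2 * π * σ ^ 2))⁻¹ *
          Real.exp (-(x - t) ^ 2 / (2 * σ ^ 2))))
        (∫ x, L x * ((x - t₀) / σ ^ 2 * ((Real.sqrt (2 * π * σ ^ 2))⁻¹ *
          Real.exp (-(x - t₀) ^ 2 / (2 * σ ^ 2))))) t₀ := by
    intro t₀
    have hc : (0 : ℝ) ≤ |t₀| + 1 := by positivity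
    have hK : (0 : ℝ) ≤ (1 + (|t₀| + 1)) / σ ^ 2 + 1 := by positivity
    refine hasDerivAt_integral_of_dominated_loc_of_deriv_le
      (F := fun t x => L x * ((Real.sqrt (2 * π * σ ^ 2))⁻¹ *
        Real.exp (-(x - t) ^ 2 / (2 * σ ^ 2))))
      (F' := fun t x => L x * ((x - t) / σ ^ 2 * ((Real.sqrt (2 * π * σ ^ 2))⁻¹ *
        Real.exp (-(x - t) ^ 2 / (2 * σ ^ 2)))))
      (Metric.ball_mem_nhds t₀ one_pos)
      (Filter.Eventually.of_forall meas0)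
      ?_ (meas1 (fun x => (x - t₀) / σ ^ 2) (by fun_prop) t₀) ?_
      (hInt (β * Real.exp M * ((1 + (|t₀| + 1)) / σ ^ 2 + 1) * (Real.sqrt (2 * π * σ ^ 2))⁻¹ *
        Real.exp ((|t₀| + 1) ^ 2 / (2 * σ ^ 2)))) ?_
    · -- integrability of F t₀
      refine (hInt (β * Real.exp M * ((1 + (|t₀| + 1)) / σ ^ 2 + 1) *
        (Real.sqrt (2 * π * σ ^ 2))⁻¹ *
        Real.exp ((|t₀| + 1) ^ 2 / (2 * σ ^ 2)))).mono' (meas0 t₀) ?_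
      filter_upwards with x
      rw [Real.norm_eq_abs]
      calc |L x * ((Real.sqrt (2 * π * σ ^ 2))⁻¹ * Real.exp (-(x - t₀) ^ 2 / (2 * σ ^ 2)))|
          = |L x * (1 * ((Real.sqrt (2 * π * σ ^ 2))⁻¹ *
              Real.exp (-(x - t₀) ^ 2 / (2 * σ ^ 2))))| := by rw [one_mul]
        _ ≤ _ := by
            apply master_bound hσ hβ hgrowth hM hc hK x t₀ 1 (by simp)
            have hd : (0:ℝ) ≤ (1 + (|t₀| + 1)) / σ ^ 2 := by positivity
            rw [abs_one]
            nlinarith [sq_nonneg x, mul_nonneg hd (sq_nonneg x)]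
    · -- bound on F'
      filter_upwards with x t ht'
      have ht : |t| ≤ |t₀| + 1 := by
        have h1 : |t - t₀| < 1 := by
          have := Metric.mem_ball.mp ht'
          rwa [Real.dist_eq] at this
        calc |t| = |t - t₀ + t₀| := by ring_nf
          _ ≤ |t - t₀| + |t₀| := abs_add_le _ _
          _ ≤ |t₀| + 1 := by linarith
      have hp : |(x - t) / σ ^ 2| ≤ ((1 + (|t₀| + 1)) / σ ^ 2 + 1) * (1 + x ^ 2) := by
        have h1 : |x - t| ≤ (1 + (|t₀| + 1)) * (1 + x ^ 2) := by
          have h2 : |x - t| ≤ |x| + |t| := abs_sub x t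
          have h3 := habs x
          nlinarith [mul_nonneg hc (sq_nonneg x)]
        calc |(x - t) / σ ^ 2| = |x - t| / σ ^ 2 := by
              rw [abs_div, abs_of_pos hσ2]
          _ ≤ ((1 + (|t₀| + 1)) * (1 + x ^ 2)) / σ ^ 2 := by gcongr
          _ = (1 + (|t₀| + 1)) / σ ^ 2 * (1 + x ^ 2) := by ring
          _ ≤ ((1 + (|t₀| + 1)) / σ ^ 2 + 1) * (1 + x ^ 2) := by nlinarith [sq_nonneg x]
      rw [Real.norm_eq_abs]
      exact master_bound hσ hβ hgrowth hM hc hK x t ((x - t) / σ ^ 2) ht hp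
    · -- differentiability
      filter_upwards with x t _
      exact (gauss_kernel_hasDerivAt σ x t).const_mul (L x)
  have hF1 : deriv (fun t : ℝ => gaussianSmoothing L σ t)
      = fun t₀ => ∫ x, L x * ((x - t₀) / σ ^ 2 * ((Real.sqrt (2 * π * σ ^ 2))⁻¹ *
          Real.exp (-(x - t₀) ^ 2 / (2 * σ ^ 2)))) := by
    funext t₀
    apply HasDerivAt.deriv
    have h := (deriv1 t₀).2
    have he : (fun t : ℝ => gaussianSmoothing L σ t)
        = fun t => ∫ x, L x * ((Real.sqrt (2 * π * σ ^ 2))⁻¹ *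
            Real.exp (-(x - t) ^ 2 / (2 * σ ^ 2))) := funext stepA
    rw [he]
    exact h
  -- Second derivative at θ
  have deriv2 : HasDerivAt (fun t => ∫ x, L x * ((x - t) / σ ^ 2 *
        ((Real.sqrt (2 * π * σ ^ 2))⁻¹ * Real.exp (-(x - t) ^ 2 / (2 * σ ^ 2)))))
      (∫ x, L x * (((x - θ) ^ 2 - σ ^ 2) / σ ^ 4 * ((Real.sqrt (2 * π * σ ^ 2))⁻¹ *
        Real.exp (-(x - θ) ^ 2 / (2 * σ ^ 2))))) θ := by
    have hc : (0 : ℝ) ≤ |θ| + 1 := by positivity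
    have hK : (0 : ℝ) ≤ (2 + 2 * (|θ| + 1) ^ 2 + σ ^ 2) / σ ^ 4 := by positivity
    refine (hasDerivAt_integral_of_dominated_loc_of_deriv_le
      (F := fun t x => L x * ((x - t) / σ ^ 2 * ((Real.sqrt (2 * π * σ ^ 2))⁻¹ *
        Real.exp (-(x - t) ^ 2 / (2 * σ ^ 2)))))
      (F' := fun t x => L x * (((x - t) ^ 2 - σ ^ 2) / σ ^ 4 * ((Real.sqrt (2 * π * σ ^ 2))⁻¹ *
        Real.exp (-(x - t) ^ 2 / (2 * σ ^ 2)))))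
      (Metric.ball_mem_nhds θ one_pos)
      (Filter.Eventually.of_forall fun t => meas1 (fun x => (x - t) / σ ^ 2) (by fun_prop) t)
      (deriv1 θ).1
      (meas1 (fun x => ((x - θ) ^ 2 - σ ^ 2) / σ ^ 4) (by fun_prop) θ) ?_
      (hInt (β * Real.exp M * ((2 + 2 * (|θ| + 1) ^ 2 + σ ^ 2) / σ ^ 4) *
        (Real.sqrt (2 * π * σ ^ 2))⁻¹ * Real.exp ((|θ| + 1) ^ 2 / (2 * σ ^ 2)))) ?_).2
    · -- bound
      filter_upwards with x t ht'
      have ht : |t| ≤ |θ| + 1 := by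
        have h1 : |t - θ| < 1 := by
          have := Metric.mem_ball.mp ht'
          rwa [Real.dist_eq] at this
        calc |t| = |t - θ + θ| := by ring_nf
          _ ≤ |t - θ| + |θ| := abs_add_le _ _
          _ ≤ |θ| + 1 := by linarith
      have hp : |((x - t) ^ 2 - σ ^ 2) / σ ^ 4|
          ≤ (2 + 2 * (|θ| + 1) ^ 2 + σ ^ 2) / σ ^ 4 * (1 + x ^ 2) := by
        have h2 : |x - t| ≤ |x| + |t| := abs_sub x t
        have h1 : |(x - t) ^ 2 - σ ^ 2| ≤ 2 * x ^ 2 + 2 * (|θ| + 1) ^ 2 + σ ^ 2 := by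
          have h3 : |(x - t) ^ 2 - σ ^ 2| ≤ |(x - t) ^ 2| + |σ ^ 2| := abs_sub _ _
          have h4 : |(x - t) ^ 2| = (x - t) ^ 2 := abs_of_nonneg (sq_nonneg _)
          have h5 : |σ ^ 2| = σ ^ 2 := abs_of_nonneg (sq_nonneg _)
          have h6 : (x - t) ^ 2 ≤ (|x| + |t|) ^ 2 := by
            have := abs_nonneg (x - t)
            nlinarith [sq_abs (x - t), abs_nonneg x, abs_nonneg t]
          have h7 : t ^ 2 ≤ (|θ| + 1) ^ 2 := by nlinarith [sq_abs t, abs_nonneg t]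
          nlinarith [sq_abs x, sq_abs t, sq_nonneg (|x| - |t|), h7]
        calc |((x - t) ^ 2 - σ ^ 2) / σ ^ 4| = |(x - t) ^ 2 - σ ^ 2| / σ ^ 4 := by
              rw [abs_div, abs_of_pos (by positivity : (0:ℝ) < σ ^ 4)]
          _ ≤ (2 * x ^ 2 + 2 * (|θ| + 1) ^ 2 + σ ^ 2) / σ ^ 4 := by gcongr
          _ ≤ ((2 + 2 * (|θ| + 1) ^ 2 + σ ^ 2) * (1 + x ^ 2)) / σ ^ 4 := by
              gcongr
              nlinarith [sq_nonneg x, mul_nonneg (sq_nonneg (|θ| + 1)) (sq_nonneg x),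
                mul_nonneg (sq_nonneg σ) (sq_nonneg x)]
          _ = (2 + 2 * (|θ| + 1) ^ 2 + σ ^ 2) / σ ^ 4 * (1 + x ^ 2) := by ring
      rw [Real.norm_eq_abs]
      exact master_bound hσ hβ hgrowth hM hc hK x t (((x - t) ^ 2 - σ ^ 2) / σ ^ 4) ht hp
    · filter_upwards with x t _
      exact (gauss_kernel2_hasDerivAt σ x hσ.ne' t).const_mul (L x)
  -- Identify the target value
  have final_eq : (1 / σ ^ 4) *
      ∫ ε, (ε ^ 2 - σ ^ 2) * L (θ + ε) ∂(gaussianReal 0 ⟨σ ^ 2, sq_nonneg σ⟩)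
      = ∫ x, L x * (((x - θ) ^ 2 - σ ^ 2) / σ ^ 4 * ((Real.sqrt (2 * π * σ ^ 2))⁻¹ *
          Real.exp (-(x - θ) ^ 2 / (2 * σ ^ 2)))) := by
    calc (1 / σ ^ 4) * ∫ ε, (ε ^ 2 - σ ^ 2) * L (θ + ε) ∂(gaussianReal 0 ⟨σ ^ 2, sq_nonneg σ⟩)
        = (1 / σ ^ 4) * ∫ ε, gaussianPDFReal 0 (⟨σ ^ 2, sq_nonneg σ⟩ : NNReal) ε *
            ((ε ^ 2 - σ ^ 2) * L (θ + ε)) := by rw [gaussianReal_integral_eq hv]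
      _ = ∫ ε, (1 / σ ^ 4) * (gaussianPDFReal 0 (⟨σ ^ 2, sq_nonneg σ⟩ : NNReal) ε *
            ((ε ^ 2 - σ ^ 2) * L (θ + ε))) := (integral_const_mul _ _).symm
      _ = ∫ x, (1 / σ ^ 4) * (gaussianPDFReal 0 (⟨σ ^ 2, sq_nonneg σ⟩ : NNReal) (x - θ) *
            (((x - θ) ^ 2 - σ ^ 2) * L (θ + (x - θ)))) :=
          (integral_sub_right_eq_self (fun ε => (1 / σ ^ 4) *
            (gaussianPDFReal 0 (⟨σ ^ 2, sq_nonneg σ⟩ : NNReal) ε *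
              ((ε ^ 2 - σ ^ 2) * L (θ + ε)))) θ).symm
      _ = ∫ x, L x * (((x - θ) ^ 2 - σ ^ 2) / σ ^ 4 * ((Real.sqrt (2 * π * σ ^ 2))⁻¹ *
            Real.exp (-(x - θ) ^ 2 / (2 * σ ^ 2)))) := by
          refine integral_congr_ae (ae_of_all _ fun x => ?_)
          dsimp only
          have hx : θ + (x - θ) = x := by ring
          rw [hpdf, hx]; ring
  rw [hF1, final_eq]
  exact deriv2
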